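/- arXiv:2508.05945 — 9 statements merged into one kernel-verified Lean document; each statement's English description precedes it below -/
import Mathlib

section
/- Let s₁ : [0,1] → [s₁(1), ∞] and s₂ : [0,1] → [s₂(1), ∞] be continuous, strictly decreasing bijections with s₁(0) = s₂(0) = ∞, and define Sᵢ(x,y) = sᵢ⁻¹(min(sᵢ(x) + sᵢ(y), sᵢ(0))) using the pseudo-inverse (sᵢ⁻¹(u) = 1 for u ≤ sᵢ(1)). Then S₁(x,y) ≤ S₂(x,y) for all x,y ∈ [0,1] if and only if the function h = s₁ ∘ s₂⁻¹ : [s₂(1), ∞] → [s₁(1), ∞] is subadditive, i.e., h(u+v) ≤ h(u) + h(v) for all u,v in [s₂(1), ∞]. -/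
open Set ENNReal

/-! Substituting `u = s₂ x`, `v = s₂ y`, the inequality `S₁ x y ≤ S₂ x y` reads
`g₁ (h u + h v) ≤ g₂ (u + v)` with `h = s₁ ∘ g₂`. Applying the decreasing map `s₁` turns it into
`h (u + v) ≤ h u + h v`, and applying `g₁`, which is decreasing on `[s₁ 1, ∞]` as the right
inverse of `s₁` there, turns it back. -/

theorem stmt_0_general
    (s₁ s₂ : ℝ → ℝ≥0∞) (g₁ g₂ : ℝ≥0∞ → ℝ)
    (ha₁ : StrictAntiOn s₁ (Icc 0 1)) (ha₂ : StrictAntiOn s₂ (Icc 0 1))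
    (h01 : s₁ 0 = ⊤) (h02 : s₂ 0 = ⊤)
    -- pseudo-inverses: `gᵢ` inverts `sᵢ` on `[sᵢ(1), ∞]` and equals 1 below `sᵢ(1)`
    (hg₁inv : ∀ x ∈ Icc (0:ℝ) 1, g₁ (s₁ x) = x)
    (hg₂inv : ∀ x ∈ Icc (0:ℝ) 1, g₂ (s₂ x) = x)
    (hg₁mem : ∀ u, g₁ u ∈ Icc (0:ℝ) 1) (hg₂mem : ∀ u, g₂ u ∈ Icc (0:ℝ) 1)
    (hg₁r : ∀ u, s₁ 1 ≤ u → s₁ (g₁ u) = u) (hg₂r : ∀ u, s₂ 1 ≤ u → s₂ (g₂ u) = u)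
    (S₁ S₂ : ℝ → ℝ → ℝ)
    (hS₁ : ∀ x ∈ Icc (0:ℝ) 1, ∀ y ∈ Icc (0:ℝ) 1,
      S₁ x y = g₁ (min (s₁ x + s₁ y) (s₁ 0)))
    (hS₂ : ∀ x ∈ Icc (0:ℝ) 1, ∀ y ∈ Icc (0:ℝ) 1,
      S₂ x y = g₂ (min (s₂ x + s₂ y) (s₂ 0))) :
    (∀ x ∈ Icc (0:ℝ) 1, ∀ y ∈ Icc (0:ℝ) 1, S₁ x y ≤ S₂ x y) ↔
      (∀ u v : ℝ≥0∞, s₂ 1 ≤ u → s₂ 1 ≤ v →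
        s₁ (g₂ (u + v)) ≤ s₁ (g₂ u) + s₁ (g₂ v)) := by
  have one_mem : (1 : ℝ) ∈ Icc (0 : ℝ) 1 := right_mem_Icc.2 zero_le_one
  have s₁_one_le : ∀ x ∈ Icc (0 : ℝ) 1, s₁ 1 ≤ s₁ x := fun x hx ↦
    ha₁.antitoneOn hx one_mem hx.2
  have s₂_one_le : ∀ x ∈ Icc (0 : ℝ) 1, s₂ 1 ≤ s₂ x := fun x hx ↦
    ha₂.antitoneOn hx one_mem hx.2
  have g₁_anti : AntitoneOn g₁ (Ici (s₁ 1)) :=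
    Function.antitoneOn_of_rightInvOn_of_mapsTo ha₁.antitoneOn (fun u hu ↦ hg₁r u hu)
      (fun u _ ↦ hg₁mem u)
  have hS₁' : ∀ x ∈ Icc (0:ℝ) 1, ∀ y ∈ Icc (0:ℝ) 1, S₁ x y = g₁ (s₁ x + s₁ y) := by
    intro x hx y hy
    rw [hS₁ x hx y hy, h01, min_top_right]
  have hS₂' : ∀ x ∈ Icc (0:ℝ) 1, ∀ y ∈ Icc (0:ℝ) 1, S₂ x y = g₂ (s₂ x + s₂ y) := by
    intro x hx y hy
    rw [hS₂ x hx y hy, h02, min_top_right]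
  constructor
  · intro hle u v hu hv
    have h := hle (g₂ u) (hg₂mem u) (g₂ v) (hg₂mem v)
    rw [hS₁' _ (hg₂mem u) _ (hg₂mem v), hS₂' _ (hg₂mem u) _ (hg₂mem v), hg₂r u hu,
      hg₂r v hv] at h
    calc s₁ (g₂ (u + v)) ≤ s₁ (g₁ (s₁ (g₂ u) + s₁ (g₂ v))) :=
          ha₁.antitoneOn (hg₁mem _) (hg₂mem _) h
      _ = s₁ (g₂ u) + s₁ (g₂ v) := hg₁r _ (le_add_right (s₁_one_le _ (hg₂mem u)))
  · intro hsub x hx y hy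
    have h := hsub (s₂ x) (s₂ y) (s₂_one_le x hx) (s₂_one_le y hy)
    rw [hg₂inv x hx, hg₂inv y hy] at h
    calc S₁ x y = g₁ (s₁ x + s₁ y) := hS₁' x hx y hy
      _ ≤ g₁ (s₁ (g₂ (s₂ x + s₂ y))) :=
          g₁_anti (s₁_one_le _ (hg₂mem _)) (le_add_right (s₁_one_le x hx)) h
      _ = S₂ x y := by rw [hg₁inv _ (hg₂mem _), hS₂' x hx y hy]

/-- For continuous cancellative t-subnorms `S₁, S₂` generated by
continuous strictly decreasing additive generators `s₁, s₂ : [0,1] → [sᵢ(1), ∞]`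
(with `sᵢ(0) = ∞`) via pseudo-inverses `g₁, g₂`, we have `S₁ ≤ S₂` iff
`s₁ ∘ s₂⁻¹` is subadditive on `[s₂(1), ∞]`. -/
theorem stmt_0
    (s₁ s₂ : ℝ → ℝ≥0∞) (g₁ g₂ : ℝ≥0∞ → ℝ)
    (hc₁ : ContinuousOn s₁ (Icc 0 1)) (hc₂ : ContinuousOn s₂ (Icc 0 1))
    (ha₁ : StrictAntiOn s₁ (Icc 0 1)) (ha₂ : StrictAntiOn s₂ (Icc 0 1))
    (h01 : s₁ 0 = ⊤) (h02 : s₂ 0 = ⊤)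
    (hsurj₁ : s₁ '' Icc 0 1 = Ici (s₁ 1)) (hsurj₂ : s₂ '' Icc 0 1 = Ici (s₂ 1))
    -- pseudo-inverses: `gᵢ` inverts `sᵢ` on `[sᵢ(1), ∞]` and equals 1 below `sᵢ(1)`
    (hg₁inv : ∀ x ∈ Icc (0:ℝ) 1, g₁ (s₁ x) = x)
    (hg₂inv : ∀ x ∈ Icc (0:ℝ) 1, g₂ (s₂ x) = x)
    (hg₁low : ∀ u, u ≤ s₁ 1 → g₁ u = 1)
    (hg₂low : ∀ u, u ≤ s₂ 1 → g₂ u = 1)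
    (hg₁mem : ∀ u, g₁ u ∈ Icc (0:ℝ) 1) (hg₂mem : ∀ u, g₂ u ∈ Icc (0:ℝ) 1)
    (hg₁r : ∀ u, s₁ 1 ≤ u → s₁ (g₁ u) = u) (hg₂r : ∀ u, s₂ 1 ≤ u → s₂ (g₂ u) = u)
    (S₁ S₂ : ℝ → ℝ → ℝ)
    (hS₁ : ∀ x ∈ Icc (0:ℝ) 1, ∀ y ∈ Icc (0:ℝ) 1,
      S₁ x y = g₁ (min (s₁ x + s₁ y) (s₁ 0)))
    (hS₂ : ∀ x ∈ Icc (0:ℝ) 1, ∀ y ∈ Icc (0:ℝ) 1,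
      S₂ x y = g₂ (min (s₂ x + s₂ y) (s₂ 0))) :
    (∀ x ∈ Icc (0:ℝ) 1, ∀ y ∈ Icc (0:ℝ) 1, S₁ x y ≤ S₂ x y) ↔
      (∀ u v : ℝ≥0∞, s₂ 1 ≤ u → s₂ 1 ≤ v →
        s₁ (g₂ (u + v)) ≤ s₁ (g₂ u) + s₁ (g₂ v)) :=
  stmt_0_general s₁ s₂ g₁ g₂ ha₁ ha₂ h01 h02 hg₁inv hg₂inv hg₁mem hg₂mem hg₁r hg₂r S₁ S₂ hS₁ hS₂
end

section
/- Let s₁ : [0,1] → [s₁(1), ∞] and s₂ : [0,1] → [s₂(1), ∞] be continuous, strictly decreasing bijections with s₁(0) = s₂(0) = ∞, generating continuous cancellative t-subnorms S₁ and S₂ respectively. Then S₁ = S₂ if and only if there exists a constant c ∈ (0,∞) such that s₁(s₂⁻¹(x)) = c·x for all x ∈ [s₂(1), ∞]. -/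
/-!
`S₁ = S₂` says exactly that `f := s₁ ∘ s₂⁻¹` is additive on `[s₂(1), ∞]`, i.e. solves Cauchy's
equation there. Being strictly increasing, `f` is then linear: `m u ≤ n v` forces
`m f(u) ≤ n f(v)` for all positive integers `m, n`, which pins the ratio `f(u) / u` down to a
common value `c`.
-/

open Set ENNReal

theorem mul_le_mul_of_forall_nat_mul_le_imp {K : Type*} [Field K] [LinearOrder K]
    [IsStrictOrderedRing K] [Archimedean K] {x y P Q : K} (hx : 0 < x) (hP : 0 ≤ P)
    (hQ : 0 ≤ Q) (h : ∀ m n : ℕ, 0 < m → 0 < n → m * x ≤ n * y → m * P ≤ n * Q) :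
    y * P ≤ x * Q := by
  rcases hP.eq_or_lt with rfl | hP
  · simpa using mul_nonneg hx.le hQ
  rw [mul_comm x, ← div_le_div_iff₀ hx hP]
  refine le_of_forall_rat_lt_imp_le fun q hq => ?_
  rcases le_or_gt q 0 with hq0 | hq0
  · exact (Rat.cast_nonpos.2 hq0).trans (div_nonneg hQ hP.le)
  have hnum : 0 < q.num := Rat.num_pos.2 hq0
  have hq_eq : (q : K) = q.num.toNat / q.den := by
    rw [← Int.cast_natCast, Int.toNat_of_nonneg hnum.le, Rat.cast_def]
  have hden : (0 : K) < q.den := by exact_mod_cast q.pos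
  rw [hq_eq, div_lt_div_iff₀ hden hx] at hq
  rw [hq_eq, div_le_div_iff₀ hden hP]
  have := h q.num.toNat q.den (by omega) q.pos (by linarith)
  linarith

lemma le_natCast_mul_of_le {a u : ℝ≥0∞} {n : ℕ} (hn : 0 < n) (hu : a ≤ u) : a ≤ n * u :=
  hu.trans (le_mul_of_one_le_left' (by exact_mod_cast hn))

def IsAdditiveOn {α β : Type*} [Add α] [Add β] (f : α → β) (s : Set α) : Prop :=
  ∀ ⦃u⦄, u ∈ s → ∀ ⦃v⦄, v ∈ s → f (u + v) = f u + f v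

namespace IsAdditiveOn

variable {f : ℝ≥0∞ → ℝ≥0∞} {a : ℝ≥0∞}

lemma map_natCast_mul (hadd : IsAdditiveOn f (Ici a)) {n : ℕ} (hn : 0 < n) {u : ℝ≥0∞}
    (hu : a ≤ u) : f (n * u) = n * f u := by
  induction n, hn using Nat.le_induction with
  | base => simp
  | succ k hk ih =>
    rw [Nat.cast_succ, add_one_mul, hadd (le_natCast_mul_of_le hk hu) hu, ih, add_one_mul]

lemma map_zero {s : Set ℝ≥0∞} (hadd : IsAdditiveOn f s) (h0 : 0 ∈ s) (hf : f 0 ≠ ⊤) :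
    f 0 = 0 := by
  have := hadd h0 h0
  rw [add_zero] at this
  exact ((ENNReal.add_right_inj hf).1 (by rwa [add_zero])).symm

lemma natCast_mul_le_natCast_mul (hadd : IsAdditiveOn f (Ici a)) (hmono : MonotoneOn f (Ici a))
    {m n : ℕ} (hm : 0 < m) (hn : 0 < n) {u v : ℝ≥0∞} (hu : a ≤ u) (hv : a ≤ v)
    (h : m * u ≤ n * v) : m * f u ≤ n * f v := by
  rw [← hadd.map_natCast_mul hm hu, ← hadd.map_natCast_mul hn hv]
  exact hmono (le_natCast_mul_of_le hm hu) (le_natCast_mul_of_le hn hv) h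

lemma mul_apply_le_mul_apply (hadd : IsAdditiveOn f (Ici a)) (hmono : MonotoneOn f (Ici a))
    {u v : ℝ≥0∞} (hu : a ≤ u) (hv : a ≤ v) (hu0 : u ≠ 0) (hut : u ≠ ⊤) (hvt : v ≠ ⊤)
    (hfu : f u ≠ ⊤) (hfv : f v ≠ ⊤) : v * f u ≤ u * f v := by
  have key := mul_le_mul_of_forall_nat_mul_le_imp (y := v.toReal) (P := (f u).toReal)
    (Q := (f v).toReal) (toReal_pos hu0 hut) toReal_nonneg toReal_nonneg fun m n hm hn h => ?_
  · rw [← toReal_le_toReal (by finiteness) (by finiteness)]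
    simpa only [toReal_mul] using key
  · have h' : (m : ℝ≥0∞) * u ≤ n * v := by
      rw [← toReal_le_toReal (by finiteness) (by finiteness)]
      simpa only [toReal_mul, toReal_natCast] using h
    simpa only [toReal_mul, toReal_natCast] using
      toReal_mono (by finiteness) (hadd.natCast_mul_le_natCast_mul hmono hm hn hu hv h')

theorem exists_eq_const_mul (hadd : IsAdditiveOn f (Ici a)) (hmono : StrictMonoOn f (Ici a))
    (ha : a ≠ ⊤) (hfin : ∀ u, a ≤ u → u ≠ ⊤ → f u ≠ ⊤) (htop : f ⊤ = ⊤) :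
    ∃ c : ℝ≥0∞, 0 < c ∧ c < ⊤ ∧ ∀ u, a ≤ u → f u = c * u := by
  set b := a + 1
  have hab : a ≤ b := le_self_add
  have hbt : b ≠ ⊤ := add_ne_top.2 ⟨ha, one_ne_top⟩
  have hb0 : b ≠ 0 := by simp [b]
  have hfb0 : f b ≠ 0 :=
    (zero_le.trans_lt (hmono self_mem_Ici hab (lt_add_right ha one_ne_zero))).ne'
  have hfbt := hfin b hab hbt
  have hc0 : 0 < f b / b := ENNReal.div_pos hfb0 hbt
  refine ⟨f b / b, hc0, div_lt_top hfbt hb0, fun u hu => ?_⟩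
  rcases eq_or_ne u ⊤ with rfl | hut
  · rw [htop, mul_top hc0.ne']
  rcases eq_or_ne u 0 with rfl | hu0
  · rw [mul_zero, hadd.map_zero hu (hfin 0 hu zero_ne_top)]
  have hfu := hfin u hu hut
  have hmono' := hmono.monotoneOn
  have h : b * f u = u * f b := le_antisymm
    (hadd.mul_apply_le_mul_apply hmono' hu hab hu0 hut hbt hfu hfbt)
    (hadd.mul_apply_le_mul_apply hmono' hab hu hb0 hbt hut hfbt hfu)
  rw [div_eq_mul_inv, mul_right_comm, mul_comm (f b), ← h, mul_comm b, mul_assoc,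
    ENNReal.mul_inv_cancel hb0 hbt, mul_one]

end IsAdditiveOn

theorem StrictAntiOn.strictAntiOn_of_rightInvOn {α β : Type*} [LinearOrder α] [Preorder β]
    {f : α → β} {g : β → α} {s : Set α} {t : Set β} (hf : StrictAntiOn f s)
    (hg : RightInvOn g f t) (hmaps : MapsTo g t s) : StrictAntiOn g t := by
  intro u hu v hv huv
  by_contra! h
  have := hf.antitoneOn (hmaps hu) (hmaps hv) h
  rw [hg hu, hg hv] at this
  exact huv.not_ge this

section Generators

variable {s₁ s₂ : ℝ → ℝ≥0∞} {g₁ g₂ : ℝ≥0∞ → ℝ}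

lemma isAdditiveOn_comp_of_pseudoInv_add_eq (ha₁ : AntitoneOn s₁ (Icc 0 1))
    (hg₁r : ∀ u, s₁ 1 ≤ u → s₁ (g₁ u) = u) (hg₂r : ∀ u, s₂ 1 ≤ u → s₂ (g₂ u) = u)
    (hg₂mem : ∀ u, g₂ u ∈ Icc (0:ℝ) 1)
    (hS : ∀ x ∈ Icc (0:ℝ) 1, ∀ y ∈ Icc (0:ℝ) 1, g₁ (s₁ x + s₁ y) = g₂ (s₂ x + s₂ y)) :
    IsAdditiveOn (s₁ ∘ g₂) (Ici (s₂ 1)) := by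
  intro u hu v hv
  have hle : s₁ 1 ≤ s₁ (g₂ u) + s₁ (g₂ v) :=
    (ha₁ (hg₂mem u) ⟨zero_le_one, le_rfl⟩ (hg₂mem u).2).trans le_self_add
  have := hS _ (hg₂mem u) _ (hg₂mem v)
  rw [hg₂r u hu, hg₂r v hv] at this
  show s₁ (g₂ (u + v)) = s₁ (g₂ u) + s₁ (g₂ v)
  rw [← this, hg₁r _ hle]

lemma pseudoInv_add_eq_of_comp_eq_const_mul (ha₂ : AntitoneOn s₂ (Icc 0 1))
    (hg₁inv : ∀ x ∈ Icc (0:ℝ) 1, g₁ (s₁ x) = x) (hg₂inv : ∀ x ∈ Icc (0:ℝ) 1, g₂ (s₂ x) = x)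
    (hg₂mem : ∀ u, g₂ u ∈ Icc (0:ℝ) 1) {c : ℝ≥0∞}
    (hc : ∀ u, s₂ 1 ≤ u → s₁ (g₂ u) = c * u) :
    ∀ x ∈ Icc (0:ℝ) 1, ∀ y ∈ Icc (0:ℝ) 1, g₁ (s₁ x + s₁ y) = g₂ (s₂ x + s₂ y) := by
  have hle : ∀ x ∈ Icc (0:ℝ) 1, s₂ 1 ≤ s₂ x := fun x hx => ha₂ hx ⟨zero_le_one, le_rfl⟩ hx.2
  have hs₁ : ∀ x ∈ Icc (0:ℝ) 1, s₁ x = c * s₂ x := fun x hx => by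
    rw [← hc _ (hle x hx), hg₂inv x hx]
  intro x hx y hy
  rw [hs₁ x hx, hs₁ y hy, ← mul_add, ← hc _ ((hle x hx).trans le_self_add),
    hg₁inv _ (hg₂mem _)]

end Generators

theorem stmt_1_general
    (s₁ s₂ : ℝ → ℝ≥0∞) (g₁ g₂ : ℝ≥0∞ → ℝ)
    (ha₁ : StrictAntiOn s₁ (Icc 0 1)) (ha₂ : StrictAntiOn s₂ (Icc 0 1))
    (h01 : s₁ 0 = ⊤) (h02 : s₂ 0 = ⊤)
    (hg₁inv : ∀ x ∈ Icc (0:ℝ) 1, g₁ (s₁ x) = x)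
    (hg₂inv : ∀ x ∈ Icc (0:ℝ) 1, g₂ (s₂ x) = x)
    (hg₂mem : ∀ u, g₂ u ∈ Icc (0:ℝ) 1)
    (hg₁r : ∀ u, s₁ 1 ≤ u → s₁ (g₁ u) = u) (hg₂r : ∀ u, s₂ 1 ≤ u → s₂ (g₂ u) = u)
    (S₁ S₂ : ℝ → ℝ → ℝ)
    (hS₁ : ∀ x ∈ Icc (0:ℝ) 1, ∀ y ∈ Icc (0:ℝ) 1, S₁ x y = g₁ (s₁ x + s₁ y))
    (hS₂ : ∀ x ∈ Icc (0:ℝ) 1, ∀ y ∈ Icc (0:ℝ) 1, S₂ x y = g₂ (s₂ x + s₂ y)) :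
    (∀ x ∈ Icc (0:ℝ) 1, ∀ y ∈ Icc (0:ℝ) 1, S₁ x y = S₂ x y) ↔
      (∃ c : ℝ≥0∞, 0 < c ∧ c < ⊤ ∧
        ∀ x : ℝ≥0∞, s₂ 1 ≤ x → s₁ (g₂ x) = c * x) := by
  have h0 : (0:ℝ) ∈ Icc (0:ℝ) 1 := ⟨le_rfl, zero_le_one⟩
  have h1 : (1:ℝ) ∈ Icc (0:ℝ) 1 := ⟨zero_le_one, le_rfl⟩
  have hS_iff : (∀ x ∈ Icc (0:ℝ) 1, ∀ y ∈ Icc (0:ℝ) 1, S₁ x y = S₂ x y) ↔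
      ∀ x ∈ Icc (0:ℝ) 1, ∀ y ∈ Icc (0:ℝ) 1, g₁ (s₁ x + s₁ y) = g₂ (s₂ x + s₂ y) :=
    forall₂_congr fun x hx => forall₂_congr fun y hy => by rw [hS₁ x hx y hy, hS₂ x hx y hy]
  rw [hS_iff]
  constructor
  · intro hS
    have hfin : ∀ u, s₂ 1 ≤ u → u ≠ ⊤ → s₁ (g₂ u) ≠ ⊤ := fun u hu hut => by
      have hg0 : g₂ u ≠ 0 := fun h => hut (by rw [← hg₂r u hu, h, h02])
      exact (h01 ▸ ha₁ h0 (hg₂mem u) ((hg₂mem u).1.lt_of_ne' hg0)).ne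
    have hg₂anti := ha₂.strictAntiOn_of_rightInvOn (t := Ici (s₂ 1)) (fun u hu => hg₂r u hu)
      fun u _ => hg₂mem u
    refine (isAdditiveOn_comp_of_pseudoInv_add_eq ha₁.antitoneOn hg₁r hg₂r hg₂mem hS
      ).exists_eq_const_mul (ha₁.comp hg₂anti fun u _ => hg₂mem u)
      (h02 ▸ ha₂ h0 h1 zero_lt_one).ne hfin ?_
    exact (congr_arg s₁ (h02 ▸ hg₂inv 0 h0)).trans h01
  · rintro ⟨c, -, -, hc⟩
    exact pseudoInv_add_eq_of_comp_eq_const_mul ha₂.antitoneOn hg₁inv hg₂inv hg₂mem hc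

/-- With generators as in the representation theorem, `S₁ = S₂` iff
`s₁ ∘ s₂⁻¹(x) = c·x` on `[s₂(1), ∞]` for some constant `c ∈ (0, ∞)`. -/
theorem stmt_1
    (s₁ s₂ : ℝ → ℝ≥0∞) (g₁ g₂ : ℝ≥0∞ → ℝ)
    (hc₁ : ContinuousOn s₁ (Icc 0 1)) (hc₂ : ContinuousOn s₂ (Icc 0 1))
    (ha₁ : StrictAntiOn s₁ (Icc 0 1)) (ha₂ : StrictAntiOn s₂ (Icc 0 1))
    (h01 : s₁ 0 = ⊤) (h02 : s₂ 0 = ⊤)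
    (hsurj₁ : s₁ '' Icc 0 1 = Ici (s₁ 1)) (hsurj₂ : s₂ '' Icc 0 1 = Ici (s₂ 1))
    (hg₁inv : ∀ x ∈ Icc (0:ℝ) 1, g₁ (s₁ x) = x)
    (hg₂inv : ∀ x ∈ Icc (0:ℝ) 1, g₂ (s₂ x) = x)
    (hg₁low : ∀ u, u ≤ s₁ 1 → g₁ u = 1)
    (hg₂low : ∀ u, u ≤ s₂ 1 → g₂ u = 1)
    (hg₁mem : ∀ u, g₁ u ∈ Icc (0:ℝ) 1) (hg₂mem : ∀ u, g₂ u ∈ Icc (0:ℝ) 1)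
    (hg₁r : ∀ u, s₁ 1 ≤ u → s₁ (g₁ u) = u) (hg₂r : ∀ u, s₂ 1 ≤ u → s₂ (g₂ u) = u)
    (S₁ S₂ : ℝ → ℝ → ℝ)
    (hS₁ : ∀ x ∈ Icc (0:ℝ) 1, ∀ y ∈ Icc (0:ℝ) 1, S₁ x y = g₁ (s₁ x + s₁ y))
    (hS₂ : ∀ x ∈ Icc (0:ℝ) 1, ∀ y ∈ Icc (0:ℝ) 1, S₂ x y = g₂ (s₂ x + s₂ y)) :
    (∀ x ∈ Icc (0:ℝ) 1, ∀ y ∈ Icc (0:ℝ) 1, S₁ x y = S₂ x y) ↔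
      (∃ c : ℝ≥0∞, 0 < c ∧ c < ⊤ ∧
        ∀ x : ℝ≥0∞, s₂ 1 ≤ x → s₁ (g₂ x) = c * x) :=
  stmt_1_general s₁ s₂ g₁ g₂ ha₁ ha₂ h01 h02 hg₁inv hg₂inv hg₂mem hg₁r hg₂r S₁ S₂ hS₁ hS₂
end

section
/- Let s₁, s₂ : [0,1] → [1, ∞] be continuous, strictly decreasing bijections with s₁(0) = s₂(0) = ∞ and s₁(1) = s₂(1) = 1 (normalized additive generators), generating continuous cancellative proper t-subnorms S₁ and S₂. If s₁ = c·s₂ + b pointwise, where 0 < c ≤ 1 and c + b = 1, then S₁(x,y) ≤ S₂(x,y) for all x,y ∈ [0,1]. -/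
open Set ENNReal

/-! Put `z = S₂(x,y) = s₂⁻¹(s₂ x + s₂ y)`. Then `s₁ z = c (s₂ x + s₂ y) + b`, which is at most
`(c s₂ x + b) + (c s₂ y + b) = s₁ x + s₁ y` because the affine map `u ↦ c u + b` has a nonnegative
intercept and is therefore subadditive. As `s₁` is decreasing, `S₁(x,y) = s₁⁻¹(s₁ x + s₁ y) ≤ z`. -/

lemma one_le_add_of_image_eq_Ici {s : ℝ → ℝ≥0∞} {A : Set ℝ} (hs : s '' A = Ici 1)
    {x y : ℝ} (hx : x ∈ A) : 1 ≤ s x + s y :=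
  le_add_right (hs ▸ mem_image_of_mem s hx : s x ∈ Ici 1)

lemma affine_subadditive (c b p q : ℝ≥0∞) : c * (p + q) + b ≤ (c * p + b) + (c * q + b) :=
  calc c * (p + q) + b ≤ c * p + c * q + (b + b) := by rw [mul_add]; gcongr; exact le_self_add
    _ = (c * p + b) + (c * q + b) := by ring

theorem stmt_2_general
    (s₁ s₂ : ℝ → ℝ≥0∞) (g₁ g₂ : ℝ≥0∞ → ℝ)
    (ha₁ : StrictAntiOn s₁ (Icc 0 1))
    (hsurj₁ : s₁ '' Icc 0 1 = Ici 1) (hsurj₂ : s₂ '' Icc 0 1 = Ici 1)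
    (hg₁mem : ∀ u, g₁ u ∈ Icc (0:ℝ) 1) (hg₂mem : ∀ u, g₂ u ∈ Icc (0:ℝ) 1)
    (hg₁r : ∀ u, 1 ≤ u → s₁ (g₁ u) = u) (hg₂r : ∀ u, 1 ≤ u → s₂ (g₂ u) = u)
    (S₁ S₂ : ℝ → ℝ → ℝ)
    (hS₁ : ∀ x ∈ Icc (0:ℝ) 1, ∀ y ∈ Icc (0:ℝ) 1, S₁ x y = g₁ (s₁ x + s₁ y))
    (hS₂ : ∀ x ∈ Icc (0:ℝ) 1, ∀ y ∈ Icc (0:ℝ) 1, S₂ x y = g₂ (s₂ x + s₂ y))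
    (c b : ℝ≥0∞)
    (hlin : ∀ x ∈ Icc (0:ℝ) 1, s₁ x = c * s₂ x + b) :
    ∀ x ∈ Icc (0:ℝ) 1, ∀ y ∈ Icc (0:ℝ) 1, S₁ x y ≤ S₂ x y := by
  intro x hx y hy
  have hu₁ : 1 ≤ s₁ x + s₁ y := one_le_add_of_image_eq_Ici hsurj₁ hx
  have hu₂ : 1 ≤ s₂ x + s₂ y := one_le_add_of_image_eq_Ici hsurj₂ hx
  set z := g₂ (s₂ x + s₂ y)
  have hz : s₁ z ≤ s₁ (g₁ (s₁ x + s₁ y)) :=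
    calc s₁ z = c * (s₂ x + s₂ y) + b := by rw [hlin z (hg₂mem _), hg₂r _ hu₂]
      _ ≤ (c * s₂ x + b) + (c * s₂ y + b) := affine_subadditive c b _ _
      _ = s₁ (g₁ (s₁ x + s₁ y)) := by rw [hg₁r _ hu₁, hlin x hx, hlin y hy]
  rw [hS₁ x hx y hy, hS₂ x hx y hy]
  exact (ha₁.le_iff_ge (hg₂mem _) (hg₁mem _)).1 hz

/-- If the normalized generators satisfy `s₁ = c·s₂ + b` with
`0 < c ≤ 1` and `c + b = 1`, then `S₁ ≤ S₂`. -/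
theorem stmt_2
    (s₁ s₂ : ℝ → ℝ≥0∞) (g₁ g₂ : ℝ≥0∞ → ℝ)
    (hc₁ : ContinuousOn s₁ (Icc 0 1)) (hc₂ : ContinuousOn s₂ (Icc 0 1))
    (ha₁ : StrictAntiOn s₁ (Icc 0 1)) (ha₂ : StrictAntiOn s₂ (Icc 0 1))
    (h01 : s₁ 0 = ⊤) (h02 : s₂ 0 = ⊤)
    (h11 : s₁ 1 = 1) (h12 : s₂ 1 = 1)
    (hsurj₁ : s₁ '' Icc 0 1 = Ici 1) (hsurj₂ : s₂ '' Icc 0 1 = Ici 1)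
    (hg₁inv : ∀ x ∈ Icc (0:ℝ) 1, g₁ (s₁ x) = x)
    (hg₂inv : ∀ x ∈ Icc (0:ℝ) 1, g₂ (s₂ x) = x)
    (hg₁mem : ∀ u, g₁ u ∈ Icc (0:ℝ) 1) (hg₂mem : ∀ u, g₂ u ∈ Icc (0:ℝ) 1)
    (hg₁r : ∀ u, 1 ≤ u → s₁ (g₁ u) = u) (hg₂r : ∀ u, 1 ≤ u → s₂ (g₂ u) = u)
    (S₁ S₂ : ℝ → ℝ → ℝ)
    (hS₁ : ∀ x ∈ Icc (0:ℝ) 1, ∀ y ∈ Icc (0:ℝ) 1, S₁ x y = g₁ (s₁ x + s₁ y))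
    (hS₂ : ∀ x ∈ Icc (0:ℝ) 1, ∀ y ∈ Icc (0:ℝ) 1, S₂ x y = g₂ (s₂ x + s₂ y))
    (c b : ℝ≥0∞) (hc0 : 0 < c) (hc1 : c ≤ 1) (hcb : c + b = 1)
    (hlin : ∀ x ∈ Icc (0:ℝ) 1, s₁ x = c * s₂ x + b) :
    ∀ x ∈ Icc (0:ℝ) 1, ∀ y ∈ Icc (0:ℝ) 1, S₁ x y ≤ S₂ x y :=
  stmt_2_general s₁ s₂ g₁ g₂ ha₁ hsurj₁ hsurj₂ hg₁mem hg₂mem hg₁r hg₂r S₁ S₂ hS₁ hS₂ c b hlin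
end

section
/- Let h : [1, ∞] → [1, ∞] be continuous, strictly increasing, and concave, with h(1) = 1 and h(u) ≤ u for all u ∈ [1, ∞]. Then h is subadditive: h(u + v) ≤ h(u) + h(v) for all u, v ∈ [1, ∞]. -/
/-!
Concavity makes the increments of `h` decrease: `h (b + t) - h b ≤ h (a + t) - h a` for
`1 ≤ a ≤ b`. Comparing with the increments at `1` twice gives
`h (u + v) - h u ≤ h (1 + v) - 1 ≤ h v + h 2 - 2`, and `h 2 ≤ 2`.
-/

open Set ENNReal

lemma concave_combination_le {h : ℝ≥0∞ → ℝ≥0∞}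
    (hconc : ∀ x ∈ Ici (1 : ℝ≥0∞), ∀ y ∈ Ici (1 : ℝ≥0∞), ∀ lam : ℝ≥0∞, lam ≤ 1 →
      lam * h x + (1 - lam) * h y ≤ h (lam * x + (1 - lam) * y))
    {x y lam mu : ℝ≥0∞} (hx : 1 ≤ x) (hy : 1 ≤ y) (hsum : lam + mu = 1) :
    lam * h x + mu * h y ≤ h (lam * x + mu * y) := by
  have hlam : lam ≤ 1 := hsum ▸ le_self_add
  obtain rfl : mu = 1 - lam := by
    rw [← hsum, ENNReal.add_sub_cancel_left (ne_top_of_le_ne_top one_ne_top hlam)]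
  exact hconc x hx y hy lam hlam

lemma concave_increment_antitone {h : ℝ≥0∞ → ℝ≥0∞}
    (hconc : ∀ x ∈ Ici (1 : ℝ≥0∞), ∀ y ∈ Ici (1 : ℝ≥0∞), ∀ lam : ℝ≥0∞, lam ≤ 1 →
      lam * h x + (1 - lam) * h y ≤ h (lam * x + (1 - lam) * y))
    {a b t : ℝ≥0∞} (ha : 1 ≤ a) (hab : a ≤ b) (hb : b ≠ ∞) (ht : t ≠ ∞) :
    h (b + t) + h a ≤ h (a + t) + h b := by
  obtain ⟨d, rfl⟩ := exists_add_of_le hab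
  have hd : d ≠ ∞ := (add_ne_top.mp hb).2
  rcases eq_or_ne (d + t) 0 with hdt | hdt
  · obtain ⟨rfl, rfl⟩ := add_eq_zero.mp hdt
    simp
  -- `a + d` and `a + t` are the convex combinations of `a` and `a + d + t` with weights
  -- `d / (d + t), t / (d + t)` and `t / (d + t), d / (d + t)`.
  set D := d + t with hD
  have hDtop : D ≠ ∞ := add_ne_top.mpr ⟨hd, ht⟩
  have hweights : d / D + t / D = 1 := by
    rw [ENNReal.div_add_div_same, ENNReal.div_self hdt hDtop]
  have hcomb : ∀ p q c : ℝ≥0∞, p * (a + d + t) + q * a = c * D →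
      p / D * (a + d + t) + q / D * a = c := by
    intro p q c hpq
    rw [← ENNReal.mul_div_right_comm, ← ENNReal.mul_div_right_comm, ENNReal.div_add_div_same, hpq,
      ENNReal.mul_div_cancel_right hdt hDtop]
  have hmem : 1 ≤ a + d + t := ha.trans (by rw [add_assoc]; exact le_self_add)
  have hd_side := concave_combination_le hconc hmem ha hweights
  have ht_side := concave_combination_le hconc hmem ha ((add_comm _ _).trans hweights)
  rw [hcomb d t (a + d) (by rw [hD]; ring)] at hd_side
  rw [hcomb t d (a + t) (by rw [hD]; ring)] at ht_side
  calc h (a + d + t) + h a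
      = (d / D + t / D) * h (a + d + t) + (d / D + t / D) * h a := by
        rw [hweights, one_mul, one_mul]
    _ = (d / D * h (a + d + t) + t / D * h a) + (t / D * h (a + d + t) + d / D * h a) := by ring
    _ ≤ h (a + t) + h (a + d) := by rw [add_comm (h (a + t))]; exact add_le_add hd_side ht_side

theorem stmt_5_general
    (h : ℝ≥0∞ → ℝ≥0∞)
    (hconc : ∀ x ∈ Ici (1 : ℝ≥0∞), ∀ y ∈ Ici (1 : ℝ≥0∞), ∀ lam : ℝ≥0∞, lam ≤ 1 →
      lam * h x + (1 - lam) * h y ≤ h (lam * x + (1 - lam) * y))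
    (h1 : h 1 = 1)
    (hle : ∀ u ∈ Ici (1 : ℝ≥0∞), h u ≤ u) :
    ∀ u ∈ Ici (1 : ℝ≥0∞), ∀ v ∈ Ici (1 : ℝ≥0∞), h (u + v) ≤ h u + h v := by
  intro u hu v hv
  rcases eq_or_ne u ∞ with rfl | hutop
  · simp
  rcases eq_or_ne v ∞ with rfl | hvtop
  · simp
  have hu_step : h (u + v) + h 1 ≤ h (1 + v) + h u :=
    concave_increment_antitone hconc le_rfl hu hutop hvtop
  have hv_step : h (v + 1) + h 1 ≤ h (1 + 1) + h v :=
    concave_increment_antitone hconc le_rfl hv hvtop one_ne_top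
  have htwo : h (1 + 1) ≤ 1 + 1 := hle _ (mem_Ici.mpr le_self_add)
  refine ENNReal.le_of_add_le_add_right (by simp : (1 + 1 : ℝ≥0∞) ≠ ∞) ?_
  calc h (u + v) + (1 + 1) = (h (u + v) + h 1) + 1 := by rw [h1, add_assoc]
    _ ≤ (h (1 + v) + h u) + 1 := by gcongr
    _ = (h (v + 1) + h 1) + h u := by rw [h1, add_comm 1 v]; ring
    _ ≤ (h (1 + 1) + h v) + h u := by gcongr
    _ ≤ ((1 + 1) + h v) + h u := by gcongr
    _ = (h u + h v) + (1 + 1) := by ring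

/-- A continuous, strictly increasing, concave function
`h : [1,∞] → [1,∞]` with `h 1 = 1` and `h u ≤ u` is subadditive on `[1,∞]`. -/
theorem stmt_5
    (h : ℝ≥0∞ → ℝ≥0∞)
    (hmaps : MapsTo h (Ici 1) (Ici 1))
    (hcont : ContinuousOn h (Ici 1))
    (hmono : StrictMonoOn h (Ici 1))
    (hconc : ∀ x ∈ Ici (1 : ℝ≥0∞), ∀ y ∈ Ici (1 : ℝ≥0∞), ∀ lam : ℝ≥0∞, lam ≤ 1 →
      lam * h x + (1 - lam) * h y ≤ h (lam * x + (1 - lam) * y))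
    (h1 : h 1 = 1)
    (hle : ∀ u ∈ Ici (1 : ℝ≥0∞), h u ≤ u) :
    ∀ u ∈ Ici (1 : ℝ≥0∞), ∀ v ∈ Ici (1 : ℝ≥0∞), h (u + v) ≤ h u + h v :=
  stmt_5_general h hconc h1 hle
end

section
/- Let h : [a, ∞] → [b, ∞] (with a, b ≥ 0) be a continuous, strictly increasing, convex function. Then h is subadditive on [a, ∞] if and only if h is quasi-homogeneous, i.e., h(t·x) ≤ t·h(x) for all x ∈ [a, ∞] and all t ≥ 1, assuming additionally h(2a) ≤ 2h(a). -/
open Set ENNReal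

/-!
Quasi-homogeneity gives `u h(u+v) ≤ (u+v) h(u)` and `v h(u+v) ≤ (u+v) h(v)`; adding them and
cancelling `u + v` gives subadditivity. Conversely, subadditivity gives `h(n x) ≤ n h(x)` for
integers `n ≥ 1`, and convexity interpolates between `x` and `n x` to reach every real `t ≥ 1`.
The case `t = ∞` needs `h x ≠ 0` for finite nonzero `x`, which strict monotonicity provides
through `h x < h (x + x) ≤ 2 h x`.
-/

def SubadditiveOn (h : ℝ≥0∞ → ℝ≥0∞) (s : Set ℝ≥0∞) : Prop :=
  ∀ u ∈ s, ∀ v ∈ s, h (u + v) ≤ h u + h v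

def QuasiHomogeneousOn (h : ℝ≥0∞ → ℝ≥0∞) (s : Set ℝ≥0∞) : Prop :=
  ∀ x ∈ s, ∀ t : ℝ≥0∞, 1 ≤ t → h (t * x) ≤ t * h x

section

variable {h : ℝ≥0∞ → ℝ≥0∞}

theorem QuasiHomogeneousOn.mul_apply_le {s : Set ℝ≥0∞} (hq : QuasiHomogeneousOn h s)
    {u w : ℝ≥0∞} (hu : u ∈ s) (huw : u ≤ w) : u * h w ≤ w * h u := by
  rcases eq_or_ne u 0 with rfl | hu0
  · simp
  rcases eq_or_ne u ∞ with rfl | huT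
  · rw [top_le_iff.mp huw]
  have hwu : w / u * u = w := ENNReal.div_mul_cancel hu0 huT
  have hone : 1 ≤ w / u := by
    rwa [ENNReal.le_div_iff_mul_le (.inl hu0) (.inl huT), one_mul]
  calc u * h w = u * h (w / u * u) := by rw [hwu]
    _ ≤ u * (w / u * h u) := mul_le_mul_right (hq u hu _ hone) u
    _ = w * h u := by rw [← mul_assoc, mul_comm u, hwu]

theorem QuasiHomogeneousOn.subadditiveOn {s : Set ℝ≥0∞} (hq : QuasiHomogeneousOn h s) :
    SubadditiveOn h s := by
  intro u hu v hv
  rcases eq_or_ne (u + v) ∞ with hT | hT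
  · rcases ENNReal.add_eq_top.mp hT with rfl | rfl
    · rw [top_add]; exact le_self_add
    · rw [add_top]; exact le_add_self
  rcases eq_or_ne (u + v) 0 with h0 | h0
  · obtain ⟨rfl, rfl⟩ := add_eq_zero.mp h0
    simp
  rw [← ENNReal.mul_le_mul_iff_right h0 hT]
  calc (u + v) * h (u + v) = u * h (u + v) + v * h (u + v) := add_mul _ _ _
    _ ≤ (u + v) * h u + (u + v) * h v :=
      add_le_add (hq.mul_apply_le hu le_self_add) (hq.mul_apply_le hv le_add_self)
    _ = (u + v) * (h u + h v) := (mul_add _ _ _).symm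

variable {a : ℝ≥0∞}

theorem SubadditiveOn.apply_natCast_mul_le (hsub : SubadditiveOn h (Ici a)) {x : ℝ≥0∞}
    (hx : x ∈ Ici a) {n : ℕ} (hn : 1 ≤ n) : h (n * x) ≤ n * h x := by
  induction n, hn using Nat.le_induction with
  | base => simp
  | succ n hn ih =>
    have hnx : n * x ∈ Ici a :=
      mem_Ici.mpr <| le_trans hx (le_mul_of_one_le_left zero_le (by exact_mod_cast hn))
    calc h ((n + 1 : ℕ) * x) = h (n * x + x) := by push_cast; ring_nf
      _ ≤ h (n * x) + h x := hsub _ hnx _ hx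
      _ ≤ n * h x + h x := add_le_add_left ih _
      _ = (n + 1 : ℕ) * h x := by push_cast; ring

theorem SubadditiveOn.apply_ne_zero (hsub : SubadditiveOn h (Ici a))
    (hmono : StrictMonoOn h (Ici a)) {x : ℝ≥0∞} (hx : x ∈ Ici a) (hx0 : x ≠ 0) (hxT : x ≠ ∞) :
    h x ≠ 0 := by
  intro hhx
  have hlt : h x < h (x + x) :=
    hmono hx (mem_Ici.mpr (le_trans hx le_self_add)) (ENNReal.lt_add_right hxT hx0)
  have hle : h (x + x) ≤ h x + h x := hsub x hx x hx
  rw [hhx, add_zero] at hle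
  exact ENNReal.not_lt_zero (hlt.trans_le hle)

theorem apply_mul_le_of_convex
    (hconv : ∀ x ∈ Ici a, ∀ y ∈ Ici a, ∀ lam : ℝ≥0∞, lam ≤ 1 →
      h (lam * x + (1 - lam) * y) ≤ lam * h x + (1 - lam) * h y)
    {x m t : ℝ≥0∞} (hx : x ∈ Ici a) (hm : 1 < m) (hmT : m ≠ ∞) (hmx : h (m * x) ≤ m * h x)
    (ht : 1 ≤ t) (htm : t ≤ m) : h (t * x) ≤ t * h x := by
  have hm0 : m - 1 ≠ 0 := (tsub_pos_of_lt hm).ne'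
  have hmT' : m - 1 ≠ ∞ := ENNReal.sub_ne_top hmT
  set lam := (t - 1) / (m - 1)
  have hlam : lam ≤ 1 := by
    rw [ENNReal.div_le_iff hm0 hmT', one_mul]
    exact tsub_le_tsub_right htm 1
  -- `t = lam * m + (1 - lam) * 1`, so `t * x` is a convex combination of `m * x` and `x`
  have hcomb : lam * m + (1 - lam) = t := by
    calc lam * m + (1 - lam) = lam * (m - 1) + (lam + (1 - lam)) := by
          rw [← add_assoc, ← mul_add_one, tsub_add_cancel_of_le hm.le]
      _ = t := by
          rw [ENNReal.div_mul_cancel hm0 hmT', add_tsub_cancel_of_le hlam,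
            tsub_add_cancel_of_le ht]
  have hmx_mem : m * x ∈ Ici a := mem_Ici.mpr <| le_trans hx (le_mul_of_one_le_left zero_le hm.le)
  calc h (t * x) = h (lam * (m * x) + (1 - lam) * x) := by
        rw [← mul_assoc, ← add_mul, hcomb]
    _ ≤ lam * h (m * x) + (1 - lam) * h x := hconv _ hmx_mem _ hx _ hlam
    _ ≤ lam * (m * h x) + (1 - lam) * h x := add_le_add_left (mul_le_mul_right hmx lam) _
    _ = t * h x := by rw [← mul_assoc, ← add_mul, hcomb]

theorem SubadditiveOn.quasiHomogeneousOn (hsub : SubadditiveOn h (Ici a))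
    (hmono : StrictMonoOn h (Ici a))
    (hconv : ∀ x ∈ Ici a, ∀ y ∈ Ici a, ∀ lam : ℝ≥0∞, lam ≤ 1 →
      h (lam * x + (1 - lam) * y) ≤ lam * h x + (1 - lam) * h y) :
    QuasiHomogeneousOn h (Ici a) := by
  intro x hx t ht
  rcases eq_or_ne t ∞ with rfl | htT
  · rcases eq_or_ne (h x) 0 with hhx | hhx
    · have hfix : ∞ * x = x := by
        by_contra hne
        have hx0 : x ≠ 0 := by rintro rfl; simp at hne
        have hxT : x ≠ ∞ := by rintro rfl; simp at hne
        exact hsub.apply_ne_zero hmono hx hx0 hxT hhx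
      rw [hfix, hhx]
      exact zero_le
    · rw [ENNReal.top_mul hhx]
      exact le_top
  obtain ⟨n, hn⟩ := ENNReal.exists_nat_gt htT
  have hn1 : 1 ≤ n := by exact_mod_cast (ht.trans_lt hn).le
  exact apply_mul_le_of_convex hconv hx (ht.trans_lt hn) (natCast_ne_top n)
    (hsub.apply_natCast_mul_le hx hn1) ht hn.le

end

theorem stmt_9_general
    (a : ℝ≥0∞) (h : ℝ≥0∞ → ℝ≥0∞)
    (hmono : StrictMonoOn h (Ici a))
    (hconv : ∀ x ∈ Ici a, ∀ y ∈ Ici a, ∀ lam : ℝ≥0∞, lam ≤ 1 →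
      h (lam * x + (1 - lam) * y) ≤ lam * h x + (1 - lam) * h y) :
    (∀ u ∈ Ici a, ∀ v ∈ Ici a, h (u + v) ≤ h u + h v) ↔
      (∀ x ∈ Ici a, ∀ t : ℝ≥0∞, 1 ≤ t → h (t * x) ≤ t * h x) :=
  ⟨fun hsub => SubadditiveOn.quasiHomogeneousOn hsub hmono hconv,
    fun hq => QuasiHomogeneousOn.subadditiveOn hq⟩

/-- For a continuous, strictly increasing, convex function
`h : [a,∞] → [b,∞]` with `h(2a) ≤ 2h(a)`, subadditivity on `[a,∞]` is
equivalent to quasi-homogeneity: `h(t·x) ≤ t·h(x)` for all `x ∈ [a,∞]`, `t ≥ 1`. -/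
theorem stmt_9
    (a b : ℝ≥0∞) (h : ℝ≥0∞ → ℝ≥0∞)
    (hmaps : MapsTo h (Ici a) (Ici b))
    (hcont : ContinuousOn h (Ici a))
    (hmono : StrictMonoOn h (Ici a))
    (hconv : ∀ x ∈ Ici a, ∀ y ∈ Ici a, ∀ lam : ℝ≥0∞, lam ≤ 1 →
      h (lam * x + (1 - lam) * y) ≤ lam * h x + (1 - lam) * h y)
    (h2a : h (2 * a) ≤ 2 * h a) :
    (∀ u ∈ Ici a, ∀ v ∈ Ici a, h (u + v) ≤ h u + h v) ↔
      (∀ x ∈ Ici a, ∀ t : ℝ≥0∞, 1 ≤ t → h (t * x) ≤ t * h x) :=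
  stmt_9_general a h hmono hconv
end

section
/- Let s₁ : (0,1) → (s₁(1), ∞) and s₂ : (0,1) → (s₂(1), ∞) be continuous, strictly decreasing surjections (additive generators restricted to (0,1) of continuous cancellative t-subnorms S₁, S₂, with sᵢ(0⁺) = ∞). If the ratio x ↦ s₁(x)/s₂(x) is non-decreasing on (0,1), then the function u ↦ s₁(s₂⁻¹(u))/u is non-increasing on (s₂(1), ∞), and consequently s₁ ∘ s₂⁻¹ is subadditive, hence S₁ ≤ S₂. -/
open Set Filter

/-!
Writing `u = s₂(x)`, the quotient `s₁(s₂⁻¹(u)) / u` is the ratio `s₁/s₂` evaluated at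
`x = s₂⁻¹(u)`, which decreases as `u` increases; a function `h` with `h(u)/u` non-increasing on
positive reals is subadditive. Applied to `s₁(s₂⁻¹(s₂ x + s₂ y)) ≤ s₁ x + s₁ y`, the decreasing
inverse `s₁⁻¹` turns this into `S₁ x y ≤ S₂ x y`.
-/

theorem StrictAntiOn.antitoneOn_of_rightInvOn {α β : Type*} [LinearOrder α] [Preorder β]
    {f : α → β} {g : β → α} {s : Set α} {t : Set β}
    (hf : StrictAntiOn f s) (hg : MapsTo g t s) (hfg : RightInvOn g f t) :
    AntitoneOn g t := fun u hu v hv huv =>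
  (hf.le_iff_ge (hg hu) (hg hv)).1 (by rwa [hfg hu, hfg hv])

theorem antitoneOn_comp_div_of_monotoneOn_div {α β : Type*} [Preorder α] [Preorder β] [Div β]
    {f₁ f₂ : α → β} {g : β → α} {s : Set α} {t : Set β}
    (hratio : MonotoneOn (fun x => f₁ x / f₂ x) s) (hg : AntitoneOn g t) (hmaps : MapsTo g t s)
    (hfg : RightInvOn g f₂ t) :
    AntitoneOn (fun u => f₁ (g u) / u) t := fun u hu v hv huv => by
  simpa only [hfg hu, hfg hv] using hratio (hmaps hv) (hmaps hu) (hg hu hv huv)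

theorem map_add_le_add_of_antitoneOn_div {𝕜 : Type*} [Field 𝕜] [LinearOrder 𝕜]
    [IsStrictOrderedRing 𝕜] {h : 𝕜 → 𝕜} {s : Set 𝕜}
    (hh : AntitoneOn (fun u => h u / u) s) (hs : s ⊆ Ioi 0) {u v : 𝕜}
    (hu : u ∈ s) (hv : v ∈ s) (huv : u + v ∈ s) :
    h (u + v) ≤ h u + h v := by
  have hu₀ : 0 < u := hs hu
  have hv₀ : 0 < v := hs hv
  have h₁ : h (u + v) / (u + v) ≤ h u / u := hh hu huv (le_add_of_nonneg_right hv₀.le)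
  have h₂ : h (u + v) / (u + v) ≤ h v / v := hh hv huv (le_add_of_nonneg_left hu₀.le)
  calc h (u + v) = u * (h (u + v) / (u + v)) + v * (h (u + v) / (u + v)) := by
        field_simp
    _ ≤ u * (h u / u) + v * (h v / v) := by gcongr
    _ = h u + h v := by field_simp

theorem stmt_11_general
    (a₁ a₂ : ℝ) (ha₂ : 0 ≤ a₂)
    (s₁ s₂ : ℝ → ℝ) (g₁ g₂ : ℝ → ℝ)
    (hd₁ : StrictAntiOn s₁ (Ioo 0 1)) (hd₂ : StrictAntiOn s₂ (Ioo 0 1))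
    (hsurj₁ : s₁ '' Ioo 0 1 = Ioi a₁) (hsurj₂ : s₂ '' Ioo 0 1 = Ioi a₂)
    -- inverses of the generators
    (hg₁inv : ∀ x ∈ Ioo (0:ℝ) 1, g₁ (s₁ x) = x)
    (hg₂inv : ∀ x ∈ Ioo (0:ℝ) 1, g₂ (s₂ x) = x)
    (hg₁mem : ∀ u ∈ Ioi a₁, g₁ u ∈ Ioo (0:ℝ) 1)
    (hg₂mem : ∀ u ∈ Ioi a₂, g₂ u ∈ Ioo (0:ℝ) 1)
    (hg₁r : ∀ u ∈ Ioi a₁, s₁ (g₁ u) = u) (hg₂r : ∀ u ∈ Ioi a₂, s₂ (g₂ u) = u)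
    (S₁ S₂ : ℝ → ℝ → ℝ)
    (hS₁ : ∀ x ∈ Ioo (0:ℝ) 1, ∀ y ∈ Ioo (0:ℝ) 1, S₁ x y = g₁ (s₁ x + s₁ y))
    (hS₂ : ∀ x ∈ Ioo (0:ℝ) 1, ∀ y ∈ Ioo (0:ℝ) 1, S₂ x y = g₂ (s₂ x + s₂ y))
    (hratio : MonotoneOn (fun x => s₁ x / s₂ x) (Ioo 0 1)) :
    AntitoneOn (fun u => s₁ (g₂ u) / u) (Ioi a₂) ∧
    (∀ u ∈ Ioi a₂, ∀ v ∈ Ioi a₂, s₁ (g₂ (u + v)) ≤ s₁ (g₂ u) + s₁ (g₂ v)) ∧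
    (∀ x ∈ Ioo (0:ℝ) 1, ∀ y ∈ Ioo (0:ℝ) 1, S₁ x y ≤ S₂ x y) := by
  have hg₁anti : AntitoneOn g₁ (Ioi a₁) := hd₁.antitoneOn_of_rightInvOn hg₁mem hg₁r
  have hg₂anti : AntitoneOn g₂ (Ioi a₂) := hd₂.antitoneOn_of_rightInvOn hg₂mem hg₂r
  have hphi : AntitoneOn (fun u => s₁ (g₂ u) / u) (Ioi a₂) :=
    antitoneOn_comp_div_of_monotoneOn_div hratio hg₂anti hg₂mem hg₂r
  have hadd : ∀ u ∈ Ioi a₂, ∀ v ∈ Ioi a₂, u + v ∈ Ioi a₂ := fun u hu v hv => by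
    simp only [mem_Ioi] at *; linarith
  have hsub : ∀ u ∈ Ioi a₂, ∀ v ∈ Ioi a₂, s₁ (g₂ (u + v)) ≤ s₁ (g₂ u) + s₁ (g₂ v) :=
    fun u hu v hv => map_add_le_add_of_antitoneOn_div hphi (Ioi_subset_Ioi ha₂) hu hv (hadd u hu v hv)
  refine ⟨hphi, hsub, fun x hx y hy => ?_⟩
  have hs₂x : s₂ x ∈ Ioi a₂ := hsurj₂ ▸ mem_image_of_mem s₂ hx
  have hs₂y : s₂ y ∈ Ioi a₂ := hsurj₂ ▸ mem_image_of_mem s₂ hy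
  set w := g₂ (s₂ x + s₂ y)
  have hw : w ∈ Ioo 0 1 := hg₂mem _ (hadd _ hs₂x _ hs₂y)
  have hs₁w : s₁ w ∈ Ioi a₁ := hsurj₁ ▸ mem_image_of_mem s₁ hw
  have key : s₁ w ≤ s₁ x + s₁ y := by
    simpa only [hg₂inv x hx, hg₂inv y hy] using hsub _ hs₂x _ hs₂y
  calc S₁ x y = g₁ (s₁ x + s₁ y) := hS₁ x hx y hy
    _ ≤ g₁ (s₁ w) := hg₁anti hs₁w (hs₁w.trans_le key) key
    _ = S₂ x y := by rw [hg₁inv w hw, hS₂ x hx y hy]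

/-- If the ratio `s₁/s₂` of the additive generators is
non-decreasing on `(0,1)`, then `u ↦ s₁(s₂⁻¹(u))/u` is non-increasing on
`(s₂(1),∞)`, hence `s₁ ∘ s₂⁻¹` is subadditive and `S₁ ≤ S₂`. -/
theorem stmt_11
    (a₁ a₂ : ℝ) (ha₁ : 0 ≤ a₁) (ha₂ : 0 ≤ a₂)
    (s₁ s₂ : ℝ → ℝ) (g₁ g₂ : ℝ → ℝ)
    (hc₁ : ContinuousOn s₁ (Ioo 0 1)) (hc₂ : ContinuousOn s₂ (Ioo 0 1))
    (hd₁ : StrictAntiOn s₁ (Ioo 0 1)) (hd₂ : StrictAntiOn s₂ (Ioo 0 1))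
    (hsurj₁ : s₁ '' Ioo 0 1 = Ioi a₁) (hsurj₂ : s₂ '' Ioo 0 1 = Ioi a₂)
    (hlim₁ : Tendsto s₁ (nhdsWithin 0 (Ioi 0)) atTop)
    (hlim₂ : Tendsto s₂ (nhdsWithin 0 (Ioi 0)) atTop)
    -- inverses of the generators
    (hg₁inv : ∀ x ∈ Ioo (0:ℝ) 1, g₁ (s₁ x) = x)
    (hg₂inv : ∀ x ∈ Ioo (0:ℝ) 1, g₂ (s₂ x) = x)
    (hg₁mem : ∀ u ∈ Ioi a₁, g₁ u ∈ Ioo (0:ℝ) 1)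
    (hg₂mem : ∀ u ∈ Ioi a₂, g₂ u ∈ Ioo (0:ℝ) 1)
    (hg₁r : ∀ u ∈ Ioi a₁, s₁ (g₁ u) = u) (hg₂r : ∀ u ∈ Ioi a₂, s₂ (g₂ u) = u)
    (S₁ S₂ : ℝ → ℝ → ℝ)
    (hS₁ : ∀ x ∈ Ioo (0:ℝ) 1, ∀ y ∈ Ioo (0:ℝ) 1, S₁ x y = g₁ (s₁ x + s₁ y))
    (hS₂ : ∀ x ∈ Ioo (0:ℝ) 1, ∀ y ∈ Ioo (0:ℝ) 1, S₂ x y = g₂ (s₂ x + s₂ y))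
    (hratio : MonotoneOn (fun x => s₁ x / s₂ x) (Ioo 0 1)) :
    AntitoneOn (fun u => s₁ (g₂ u) / u) (Ioi a₂) ∧
    (∀ u ∈ Ioi a₂, ∀ v ∈ Ioi a₂, s₁ (g₂ (u + v)) ≤ s₁ (g₂ u) + s₁ (g₂ v)) ∧
    (∀ x ∈ Ioo (0:ℝ) 1, ∀ y ∈ Ioo (0:ℝ) 1, S₁ x y ≤ S₂ x y) :=
  stmt_11_general a₁ a₂ ha₂ s₁ s₂ g₁ g₂ hd₁ hd₂ hsurj₁ hsurj₂ hg₁inv hg₂inv hg₁mem hg₂mem hg₁r hg₂r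
    S₁ S₂ hS₁ hS₂ hratio
end

section
/- The function ψ : [1, ∞) → [1, ∞) defined by ψ(u) = −u² + 4u − 2 for 1 ≤ u ≤ 2 and ψ(u) = u for u ≥ 2 is a strictly increasing bijection that is subadditive on [1, ∞) (i.e., ψ(u+v) ≤ ψ(u) + ψ(v) for all u, v ≥ 1), yet ψ(u)/u is not non-increasing on [1, ∞). -/
/-!
On `[1, 2]` we have `ψ u = 2 - (2 - u)²`, an increasing arc from `ψ 1 = 1` to `ψ 2 = 2` lying
above the diagonal; beyond `2`, `ψ` is the identity. Since `u + v ≥ 2` for `u, v ≥ 1`,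
subadditivity reduces to `u + v ≤ ψ u + ψ v`, which holds because `ψ ≥ id`. The arc above the
diagonal is also what breaks monotonicity of the ratio: `ψ 1 / 1 = 1 < 7/6 = ψ (3/2) / (3/2)`.
-/

open Set

noncomputable def psi (u : ℝ) : ℝ := if u ≤ 2 then -u ^ 2 + 4 * u - 2 else u

lemma psi_of_le_two {u : ℝ} (h : u ≤ 2) : psi u = 2 - (2 - u) ^ 2 := by
  rw [psi, if_pos h]; ring

lemma psi_of_two_le {u : ℝ} (h : 2 ≤ u) : psi u = u := by
  rcases h.eq_or_lt with rfl | h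
  · norm_num [psi]
  · rw [psi, if_neg h.not_ge]

lemma le_psi {u : ℝ} (h : 1 ≤ u) : u ≤ psi u := by
  rcases le_total u 2 with h2 | h2
  · rw [psi_of_le_two h2]; nlinarith
  · rw [psi_of_two_le h2]

lemma strictMonoOn_psi : StrictMonoOn psi (Ici 1) := by
  intro u hu v _ huv
  rcases le_total v 2 with hv2 | hv2
  · rw [psi_of_le_two (huv.le.trans hv2), psi_of_le_two hv2]
    nlinarith [mem_Ici.1 hu]
  · rw [psi_of_two_le hv2]
    rcases le_total u 2 with hu2 | hu2
    · rw [psi_of_le_two hu2]; nlinarith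
    · rwa [psi_of_two_le hu2]

lemma mapsTo_psi : MapsTo psi (Ici 1) (Ici 1) :=
  fun _ hu => le_trans hu (le_psi hu)

lemma surjOn_psi : SurjOn psi (Ici 1) (Ici 1) := by
  intro y hy
  rcases le_total 2 y with h2 | h2
  · exact ⟨y, hy, psi_of_two_le h2⟩
  · have hsq : Real.sqrt (2 - y) ^ 2 = 2 - y := Real.sq_sqrt (by linarith)
    have hle : Real.sqrt (2 - y) ≤ 1 := Real.sqrt_le_one.2 (by linarith [mem_Ici.1 hy])
    refine ⟨2 - Real.sqrt (2 - y), mem_Ici.2 (by linarith), ?_⟩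
    rw [psi_of_le_two (by linarith [Real.sqrt_nonneg (2 - y)])]
    linarith

lemma psi_add_le {u v : ℝ} (hu : 1 ≤ u) (hv : 1 ≤ v) : psi (u + v) ≤ psi u + psi v := by
  rw [psi_of_two_le (by linarith)]
  linarith [le_psi hu, le_psi hv]

lemma not_antitoneOn_psi_div : ¬ AntitoneOn (fun u => psi u / u) (Ici 1) := by
  intro h
  have hratio := h (mem_Ici.2 le_rfl) (mem_Ici.2 (by norm_num : (1 : ℝ) ≤ 3 / 2)) (by norm_num)
  dsimp only at hratio
  rw [psi_of_le_two (by norm_num), psi_of_le_two (by norm_num)] at hratio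
  norm_num at hratio

/-- `ψ(u) = -u² + 4u - 2` on `[1,2]`, `ψ(u) = u` on `[2,∞)` is a
strictly increasing bijection of `[1,∞)` onto itself which is subadditive, yet
`ψ(u)/u` is not non-increasing on `[1,∞)`. -/
theorem stmt_13 :
    ∃ ψ : ℝ → ℝ,
      (∀ u, 1 ≤ u → u ≤ 2 → ψ u = -u ^ 2 + 4 * u - 2) ∧
      (∀ u, 2 ≤ u → ψ u = u) ∧
      StrictMonoOn ψ (Ici 1) ∧
      BijOn ψ (Ici 1) (Ici 1) ∧
      (∀ u ∈ Ici (1:ℝ), ∀ v ∈ Ici (1:ℝ), ψ (u + v) ≤ ψ u + ψ v) ∧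
      ¬ AntitoneOn (fun u => ψ u / u) (Ici 1) :=
  ⟨psi, fun _ _ h => if_pos h, fun _ => psi_of_two_le, strictMonoOn_psi,
    ⟨mapsTo_psi, strictMonoOn_psi.injOn, surjOn_psi⟩,
    fun _ hu _ hv => psi_add_le hu hv, not_antitoneOn_psi_div⟩
end

section
/- Let s : [0,1] → [1, ∞] be a normalized additive generator of a continuous cancellative proper t-subnorm S (continuous strictly decreasing bijection, s(1) = 1, s(0) = ∞), and let T be a strict t-norm given by T(x,y) = φ⁻¹(φ(x)·φ(y)) for a strictly increasing bijection φ : [0,1] → [0,1]. Then S(x,y) ≤ T(x,y) for all x,y ∈ [0,1] if and only if the function g = s ∘ φ⁻¹ : [0,1] → [1,∞] satisfies g(uv) ≤ g(u) + g(v) for all u, v ∈ [0,1]. -/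
open Set ENNReal

/-!
Since `s` is an order-reversing bijection of `[0,1]` onto `[1,∞]` with inverse `sinv`,
`S x y = sinv (s x + s y) ≤ T x y` holds iff `s (T x y) ≤ s x + s y`. Writing `x = φ⁻¹ u`,
`y = φ⁻¹ v`, the left-hand side becomes `s (φ⁻¹ (u v))`, i.e. `g (u v)`, and the right-hand
side `g u + g v`.
-/

theorem StrictAntiOn.le_iff_apply_le {α β : Type*} [LinearOrder α] [Preorder β]
    {s : α → β} {I : Set α} (hs : StrictAntiOn s I) {sinv : β → α} {a : β}
    (ha : sinv a ∈ I) (hsa : s (sinv a) = a) {t : α} (ht : t ∈ I) :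
    sinv a ≤ t ↔ s t ≤ a := by
  conv_rhs => rw [← hsa]
  exact (hs.le_iff_ge ht ha).symm

theorem one_le_of_strictAntiOn_Icc {s : ℝ → ℝ≥0∞} (hs : StrictAntiOn s (Icc 0 1))
    (hs1 : s 1 = 1) {x : ℝ} (hx : x ∈ Icc (0:ℝ) 1) : 1 ≤ s x :=
  hs1 ▸ hs.antitoneOn hx (right_mem_Icc.2 zero_le_one) hx.2

theorem stmt_15_general
    (s : ℝ → ℝ≥0∞) (sinv : ℝ≥0∞ → ℝ)
    (has : StrictAntiOn s (Icc 0 1))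
    (hs1 : s 1 = 1)
    (hsinvmem : ∀ u, sinv u ∈ Icc (0:ℝ) 1)
    (hsinvr : ∀ u, 1 ≤ u → s (sinv u) = u)
    (φ φinv : ℝ → ℝ)
    (hφbij : BijOn φ (Icc 0 1) (Icc 0 1))
    (hφinv : ∀ x ∈ Icc (0:ℝ) 1, φinv (φ x) = x)
    (hφinvmem : ∀ u ∈ Icc (0:ℝ) 1, φinv u ∈ Icc (0:ℝ) 1)
    (hφinvr : ∀ u ∈ Icc (0:ℝ) 1, φ (φinv u) = u)
    (S T : ℝ → ℝ → ℝ)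
    (hS : ∀ x ∈ Icc (0:ℝ) 1, ∀ y ∈ Icc (0:ℝ) 1, S x y = sinv (s x + s y))
    (hT : ∀ x ∈ Icc (0:ℝ) 1, ∀ y ∈ Icc (0:ℝ) 1, T x y = φinv (φ x * φ y)) :
    (∀ x ∈ Icc (0:ℝ) 1, ∀ y ∈ Icc (0:ℝ) 1, S x y ≤ T x y) ↔
      (∀ u ∈ Icc (0:ℝ) 1, ∀ v ∈ Icc (0:ℝ) 1,
        s (φinv (u * v)) ≤ s (φinv u) + s (φinv v)) := by
  have key : ∀ x ∈ Icc (0:ℝ) 1, ∀ y ∈ Icc (0:ℝ) 1,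
      S x y ≤ T x y ↔ s (φinv (φ x * φ y)) ≤ s x + s y := by
    intro x hx y hy
    have hsum : 1 ≤ s x + s y := le_add_right (one_le_of_strictAntiOn_Icc has hs1 hx)
    have hT_mem : φinv (φ x * φ y) ∈ Icc (0:ℝ) 1 :=
      hφinvmem _ (unitInterval.mul_mem (hφbij.mapsTo hx) (hφbij.mapsTo hy))
    rw [hS x hx y hy, hT x hx y hy]
    exact has.le_iff_apply_le (hsinvmem _) (hsinvr _ hsum) hT_mem
  constructor
  · intro hST u hu v hv
    have hx := hφinvmem u hu
    have hy := hφinvmem v hv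
    have h := (key _ hx _ hy).1 (hST _ hx _ hy)
    rwa [hφinvr u hu, hφinvr v hv] at h
  · intro hg x hx y hy
    refine (key x hx y hy).2 ?_
    simpa only [hφinv x hx, hφinv y hy] using
      hg _ (hφbij.mapsTo hx) _ (hφbij.mapsTo hy)

/-- For a continuous cancellative proper t-subnorm `S` with
normalized generator `s : [0,1] → [1,∞]` and a strict t-norm
`T(x,y) = φ⁻¹(φ(x)·φ(y))`, one has `S ≤ T` iff `g = s ∘ φ⁻¹` is
submultiplicative-additive: `g(uv) ≤ g(u) + g(v)` for `u, v ∈ [0,1]`. -/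
theorem stmt_15
    (s : ℝ → ℝ≥0∞) (sinv : ℝ≥0∞ → ℝ)
    (hcs : ContinuousOn s (Icc 0 1)) (has : StrictAntiOn s (Icc 0 1))
    (hs1 : s 1 = 1) (hs0 : s 0 = ⊤) (hsurj : s '' Icc 0 1 = Ici 1)
    (hsinv : ∀ x ∈ Icc (0:ℝ) 1, sinv (s x) = x)
    (hsinvmem : ∀ u, sinv u ∈ Icc (0:ℝ) 1)
    (hsinvr : ∀ u, 1 ≤ u → s (sinv u) = u)
    (φ φinv : ℝ → ℝ)
    (hφ : StrictMonoOn φ (Icc 0 1)) (hφbij : BijOn φ (Icc 0 1) (Icc 0 1))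
    (hφinv : ∀ x ∈ Icc (0:ℝ) 1, φinv (φ x) = x)
    (hφinvmem : ∀ u ∈ Icc (0:ℝ) 1, φinv u ∈ Icc (0:ℝ) 1)
    (hφinvr : ∀ u ∈ Icc (0:ℝ) 1, φ (φinv u) = u)
    (S T : ℝ → ℝ → ℝ)
    (hS : ∀ x ∈ Icc (0:ℝ) 1, ∀ y ∈ Icc (0:ℝ) 1, S x y = sinv (s x + s y))
    (hT : ∀ x ∈ Icc (0:ℝ) 1, ∀ y ∈ Icc (0:ℝ) 1, T x y = φinv (φ x * φ y)) :
    (∀ x ∈ Icc (0:ℝ) 1, ∀ y ∈ Icc (0:ℝ) 1, S x y ≤ T x y) ↔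
      (∀ u ∈ Icc (0:ℝ) 1, ∀ v ∈ Icc (0:ℝ) 1,
        s (φinv (u * v)) ≤ s (φinv u) + s (φinv v)) :=
  stmt_15_general s sinv has hs1 hsinvmem hsinvr φ φinv hφbij hφinv hφinvmem hφinvr S T hS hT
end

section
/- Let S : [0,1]² → [0,1] be a continuous cancellative t-subnorm (commutative, associative, non-decreasing, S(x,y) ≤ min(x,y), continuous, cancellative — in particular admitting a continuous strictly decreasing additive generator s with s(0) = ∞, so that all powers x_S^(n) of x ∈ (0,1) are strictly positive). Then there is no nilpotent t-norm T with S(x,y) ≤ T(x,y) for all x,y ∈ [0,1]. -/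
open Set

/-- `Spow S x n` is the `(n+1)`-fold power `x_S^{(n+1)}` of `x` under the binary
operation `S`: `Spow S x 0 = x` and `Spow S x (n+1) = S x (Spow S x n)`. -/
def Spow (S : ℝ → ℝ → ℝ) (x : ℝ) : ℕ → ℝ
  | 0 => x
  | n + 1 => S x (Spow S x n)

section Spow

variable {S T : ℝ → ℝ → ℝ} {s : Set ℝ} {x : ℝ}

theorem monotoneOn_right_of_comm (hcomm : ∀ a ∈ s, ∀ b ∈ s, T a b = T b a)
    (hmono : ∀ b ∈ s, MonotoneOn (fun a => T a b) s) (a : ℝ) (ha : a ∈ s) :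
    MonotoneOn (T a) s := by
  intro b hb c hc hbc
  rw [hcomm a ha b hb, hcomm a ha c hc]
  exact hmono a ha hb hc hbc

theorem Spow_mem (hS : ∀ a ∈ s, ∀ b ∈ s, S a b ∈ s) (hx : x ∈ s) :
    ∀ n, Spow S x n ∈ s
  | 0 => hx
  | n + 1 => hS x hx _ (Spow_mem hS hx n)

theorem Spow_le_Spow (hS : ∀ a ∈ s, ∀ b ∈ s, S a b ∈ s) (hT : ∀ a ∈ s, ∀ b ∈ s, T a b ∈ s)
    (hST : ∀ a ∈ s, ∀ b ∈ s, S a b ≤ T a b) (hTmono : ∀ a ∈ s, MonotoneOn (T a) s)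
    (hx : x ∈ s) : ∀ n, Spow S x n ≤ Spow T x n
  | 0 => le_rfl
  | n + 1 =>
    calc S x (Spow S x n) ≤ T x (Spow S x n) := hST x hx _ (Spow_mem hS hx n)
      _ ≤ T x (Spow T x n) :=
        hTmono x hx (Spow_mem hS hx n) (Spow_mem hT hx n) (Spow_le_Spow hS hT hST hTmono hx n)

end Spow

theorem stmt_16_general
    (S : ℝ → ℝ → ℝ)
    (hSmem : ∀ x ∈ Icc (0:ℝ) 1, ∀ y ∈ Icc (0:ℝ) 1, S x y ∈ Icc (0:ℝ) 1)
    (hSpos : ∀ x ∈ Ioo (0:ℝ) 1, ∀ n : ℕ, 0 < Spow S x n) :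
    ¬ ∃ T : ℝ → ℝ → ℝ,
      (∀ x ∈ Icc (0:ℝ) 1, ∀ y ∈ Icc (0:ℝ) 1, T x y = T y x) ∧
      (∀ x ∈ Icc (0:ℝ) 1, ∀ y ∈ Icc (0:ℝ) 1, ∀ z ∈ Icc (0:ℝ) 1,
        T (T x y) z = T x (T y z)) ∧
      (∀ y ∈ Icc (0:ℝ) 1, MonotoneOn (fun x => T x y) (Icc 0 1)) ∧
      (∀ x ∈ Icc (0:ℝ) 1, T x 1 = x) ∧
      (∀ x ∈ Icc (0:ℝ) 1, ∀ y ∈ Icc (0:ℝ) 1, T x y ∈ Icc (0:ℝ) 1) ∧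
      ContinuousOn (fun p : ℝ × ℝ => T p.1 p.2) (Icc 0 1 ×ˢ Icc 0 1) ∧
      (∀ x ∈ Ioo (0:ℝ) 1, ∃ n : ℕ, Spow T x n = 0) ∧
      (∀ x ∈ Icc (0:ℝ) 1, ∀ y ∈ Icc (0:ℝ) 1, S x y ≤ T x y) := by
  rintro ⟨T, hTcomm, -, hTmono, -, hTmem, -, hTnil, hST⟩
  have hx : (1/2 : ℝ) ∈ Ioo (0:ℝ) 1 := by norm_num
  obtain ⟨n, hn⟩ := hTnil _ hx
  have hle : Spow S (1/2) n ≤ Spow T (1/2) n :=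
    Spow_le_Spow hSmem hTmem hST (monotoneOn_right_of_comm hTcomm hTmono)
      (Ioo_subset_Icc_self hx) n
  exact (hSpos _ hx n).not_ge (hn ▸ hle)

/-- For a continuous cancellative t-subnorm `S` (all of whose
powers of points of `(0,1)` are strictly positive), there is no nilpotent
t-norm `T` with `S ≤ T`. -/
theorem stmt_16
    (S : ℝ → ℝ → ℝ)
    (hScomm : ∀ x ∈ Icc (0:ℝ) 1, ∀ y ∈ Icc (0:ℝ) 1, S x y = S y x)
    (hSassoc : ∀ x ∈ Icc (0:ℝ) 1, ∀ y ∈ Icc (0:ℝ) 1, ∀ z ∈ Icc (0:ℝ) 1,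
      S (S x y) z = S x (S y z))
    (hSmono : ∀ y ∈ Icc (0:ℝ) 1, MonotoneOn (fun x => S x y) (Icc 0 1))
    (hSle : ∀ x ∈ Icc (0:ℝ) 1, ∀ y ∈ Icc (0:ℝ) 1, S x y ≤ min x y)
    (hSmem : ∀ x ∈ Icc (0:ℝ) 1, ∀ y ∈ Icc (0:ℝ) 1, S x y ∈ Icc (0:ℝ) 1)
    (hScont : ContinuousOn (fun p : ℝ × ℝ => S p.1 p.2) (Icc 0 1 ×ˢ Icc 0 1))
    (hScanc : ∀ x ∈ Icc (0:ℝ) 1, ∀ y ∈ Icc (0:ℝ) 1, ∀ z ∈ Icc (0:ℝ) 1,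
      0 < x → S x y = S x z → y = z)
    (hSpos : ∀ x ∈ Ioo (0:ℝ) 1, ∀ n : ℕ, 0 < Spow S x n) :
    ¬ ∃ T : ℝ → ℝ → ℝ,
      (∀ x ∈ Icc (0:ℝ) 1, ∀ y ∈ Icc (0:ℝ) 1, T x y = T y x) ∧
      (∀ x ∈ Icc (0:ℝ) 1, ∀ y ∈ Icc (0:ℝ) 1, ∀ z ∈ Icc (0:ℝ) 1,
        T (T x y) z = T x (T y z)) ∧
      (∀ y ∈ Icc (0:ℝ) 1, MonotoneOn (fun x => T x y) (Icc 0 1)) ∧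
      (∀ x ∈ Icc (0:ℝ) 1, T x 1 = x) ∧
      (∀ x ∈ Icc (0:ℝ) 1, ∀ y ∈ Icc (0:ℝ) 1, T x y ∈ Icc (0:ℝ) 1) ∧
      ContinuousOn (fun p : ℝ × ℝ => T p.1 p.2) (Icc 0 1 ×ˢ Icc 0 1) ∧
      (∀ x ∈ Ioo (0:ℝ) 1, ∃ n : ℕ, Spow T x n = 0) ∧
      (∀ x ∈ Icc (0:ℝ) 1, ∀ y ∈ Icc (0:ℝ) 1, S x y ≤ T x y) :=
  stmt_16_general S hSmem hSpos
end
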